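/- arXiv:1805.10862 — 2 statements merged into one kernel-verified Lean document; each statement's English description precedes it below -/
import Mathlib

section
/- (Equicontinuity of approximately holomorphic families) Let D ⊂ ℂ be a disk and F a family of C¹ functions ψ: D̄ → ℂ with uniform bounds |ψ| ≤ M₁ and |∂ψ/∂z̄| ≤ M₂ on D̄. Then F is equicontinuous at every interior point of D. -/
/-
Mean-value argument. Green's theorem on the annulus between radii `r₁ < r₂` around `ζ`, pulled back
to a rectangle by `w ↦ ζ + exp w`, shows that the circle averages of `ψ` around `ζ` move at rate at
most `2 sup |∂ψ/∂z̄|` in the radius; letting `r₁ → 0`, the circle average at radius `r` is within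
`2 M₂ r` of `ψ ζ`. Integrating in polar coordinates, the disc integral of `ψ` over `B(ζ, ρ)` is
`π ρ² ψ ζ` up to `(4/3) π M₂ ρ³`. The disc integrals around two centres `ζ₁, ζ₂` differ by at most
`M₁` times the area of the symmetric difference of the discs, which is `O(ρ |ζ₁ - ζ₂|)`. Hence
`|ψ ζ₁ - ψ ζ₂| ≤ (8/3) M₂ ρ + 6 M₁ |ζ₁ - ζ₂| / ρ`, which is small once `ρ` is small and
`|ζ₁ - ζ₂| ≪ ρ`.
-/
open Metric

/-- The antiholomorphic derivative `∂ψ/∂z̄ = (1/2)(Dψ(1) + i·Dψ(i))`. -/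
noncomputable def dbar (ψ : ℂ → ℂ) (z : ℂ) : ℂ :=
  (1 / 2) * (fderiv ℝ ψ z 1 + Complex.I * fderiv ℝ ψ z Complex.I)

open Complex MeasureTheory Set Real Filter Topology
open scoped ComplexConjugate

theorem exists_pos_le_and_mul_lt {α : Type*} [Semifield α] [LinearOrder α] [IsStrictOrderedRing α]
    {a C ε : α} (ha : 0 < a) (hC : 0 ≤ C) (hε : 0 < ε) : ∃ x, 0 < x ∧ x ≤ a ∧ C * x < ε := by
  obtain ⟨c, hc, hCc⟩ := exists_pos_mul_lt hε C
  exact ⟨min a c, lt_min ha hc, min_le_left _ _,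
    (mul_le_mul_of_nonneg_left (min_le_right _ _) hC).trans_lt hCc⟩

theorem norm_setIntegral_sub_setIntegral_le {X E : Type*} [MeasurableSpace X]
    [NormedAddCommGroup E] [NormedSpace ℝ E] {μ : Measure X} {f : X → E} {s t : Set X} {C : ℝ}
    (hs : MeasurableSet s) (ht : MeasurableSet t) (hsμ : μ s ≠ ⊤) (htμ : μ t ≠ ⊤)
    (hf : IntegrableOn f (s ∪ t) μ) (hC : ∀ x ∈ s ∪ t, ‖f x‖ ≤ C) :
    ‖(∫ x in s, f x ∂μ) - ∫ x in t, f x ∂μ‖ ≤ C * (μ.real (s \ t) + μ.real (t \ s)) := by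
  have hdiff : (∫ x in s, f x ∂μ) - ∫ x in t, f x ∂μ =
      (∫ x in s \ t, f x ∂μ) - ∫ x in t \ s, f x ∂μ := by
    rw [← integral_inter_add_sdiff ht (hf.mono_set subset_union_left),
      ← integral_inter_add_sdiff hs (hf.mono_set subset_union_right), inter_comm t s]
    abel
  rw [hdiff, mul_add]
  refine (norm_sub_le _ _).trans (add_le_add ?_ ?_)
  · exact norm_setIntegral_le_of_norm_le_const ((measure_mono sdiff_subset).trans_lt hsμ.lt_top)
      fun x hx => hC x (Or.inl hx.1)
  · exact norm_setIntegral_le_of_norm_le_const ((measure_mono sdiff_subset).trans_lt htμ.lt_top)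
      fun x hx => hC x (Or.inr hx.1)

theorem measureReal_ball_sdiff_ball_le (ζ ζ' : ℂ) {ρ : ℝ} (hρ : 0 ≤ ρ) :
    volume.real (ball ζ ρ \ ball ζ' ρ) ≤ π * ((ρ + dist ζ ζ') ^ 2 - ρ ^ 2) := by
  have hball : ∀ r, 0 ≤ r → volume.real (ball ζ' r) = π * r ^ 2 := fun r hr => by
    simp [measureReal_def, hr]
    ring
  have hsub : ball ζ ρ \ ball ζ' ρ ⊆ ball ζ' (ρ + dist ζ ζ') \ ball ζ' ρ :=
    sdiff_subset_sdiff_left (ball_subset_ball' le_rfl)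
  calc _ ≤ volume.real (ball ζ' (ρ + dist ζ ζ') \ ball ζ' ρ) :=
        measureReal_mono hsub ((measure_mono sdiff_subset).trans_lt measure_ball_lt_top).ne
    _ = π * ((ρ + dist ζ ζ') ^ 2 - ρ ^ 2) := by
      rw [measureReal_sdiff (ball_subset_ball (by linarith [dist_nonneg (x := ζ) (y := ζ')]))
        measurableSet_ball, hball _ hρ, hball _ (by positivity)]
      ring

theorem integral_ball_eq_integral_circleAverage {E : Type*} [NormedAddCommGroup E]
    [NormedSpace ℝ E] [CompleteSpace E] {f : ℂ → E} {ζ : ℂ} {ρ : ℝ} (hρ : 0 ≤ ρ)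
    (hf : ContinuousOn f (closedBall ζ ρ)) :
    ∫ z in ball ζ ρ, f z = ∫ r in 0..ρ, (2 * π * r) • circleAverage f ζ r := by
  set g : ℂ → E := (ball (0 : ℂ) ρ).indicator fun u => f (ζ + u)
  have hpolar : ∀ p ∈ polarCoord.target, p.1 • g (Complex.polarCoord.symm p) =
      {p : ℝ × ℝ | p.1 < ρ}.indicator (fun p => p.1 • f (circleMap ζ p.1 p.2)) p := by
    rintro p hp
    have hcm : ζ + Complex.polarCoord.symm p = circleMap ζ p.1 p.2 := by
      rw [Complex.polarCoord_symm_apply, circleMap, Complex.exp_mul_I]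
      push_cast
      ring
    have hnorm : ‖Complex.polarCoord.symm p‖ = p.1 := by
      rw [Complex.norm_polarCoord_symm, abs_of_pos hp.1]
    by_cases hlt : p.1 < ρ <;> dsimp only [g]
    · rw [indicator_of_mem (show p ∈ {q : ℝ × ℝ | q.1 < ρ} from hlt), indicator_of_mem, hcm]
      rwa [mem_ball_zero_iff, hnorm]
    · rw [indicator_of_notMem (show p ∉ {q : ℝ × ℝ | q.1 < ρ} from hlt), indicator_of_notMem,
        smul_zero]
      rwa [mem_ball_zero_iff, hnorm]
  have htarget : polarCoord.target ∩ {p : ℝ × ℝ | p.1 < ρ} = Ioo 0 ρ ×ˢ Ioo (-π) π := by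
    ext ⟨r, θ⟩
    simp only [polarCoord_target, mem_inter_iff, mem_prod, mem_Ioi, mem_Ioo, mem_ofPred_eq]
    tauto
  have hint : IntegrableOn (fun p : ℝ × ℝ => p.1 • f (circleMap ζ p.1 p.2))
      (Ioo 0 ρ ×ˢ Ioo (-π) π) (volume.prod volume) := by
    refine ContinuousOn.integrableOn_compact (isCompact_Icc.prod isCompact_Icc)
      (continuous_fst.continuousOn.smul (hf.comp (by fun_prop) fun p hp => ?_))
      |>.mono_set (prod_mono Ioo_subset_Icc_self Ioo_subset_Icc_self)
    simpa [dist_eq_norm, circleMap_sub_center, abs_of_nonneg hp.1.1] using hp.1.2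
  calc ∫ z in ball ζ ρ, f z = ∫ u, g u := by
        rw [← integral_indicator measurableSet_ball, ← integral_add_left_eq_self _ ζ]
        congr 1 with u
        simp [g, indicator, dist_eq_norm]
    _ = ∫ p in polarCoord.target, p.1 • g (Complex.polarCoord.symm p) :=
        (Complex.integral_comp_polarCoord_symm g).symm
    _ = ∫ p in Ioo 0 ρ ×ˢ Ioo (-π) π, p.1 • f (circleMap ζ p.1 p.2) := by
        rw [setIntegral_congr_fun polarCoord.open_target.measurableSet hpolar,
          setIntegral_indicator (measurableSet_lt measurable_fst measurable_const), htarget]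
    _ = ∫ r in Ioo 0 ρ, ∫ θ in Ioo (-π) π, r • f (circleMap ζ r θ) := by
        rw [Measure.volume_eq_prod]
        exact setIntegral_prod _ hint
    _ = ∫ r in 0..ρ, (2 * π * r) • circleAverage f ζ r := by
        rw [intervalIntegral.integral_of_le hρ, integral_Ioc_eq_integral_Ioo]
        refine setIntegral_congr_fun measurableSet_Ioo fun r _ => ?_
        rw [circleAverage_eq_integral_add (-π), intervalIntegral.integral_comp_add_right
          (fun θ => f (circleMap ζ r θ)), integral_smul, ← integral_Ioc_eq_integral_Ioo,
          ← intervalIntegral.integral_of_le (by linarith [pi_pos]), smul_smul]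
        congr 1
        · field_simp
        · congr 1 <;> ring

theorem continuousOn_circleAverage {E : Type*} [NormedAddCommGroup E] [NormedSpace ℝ E]
    {f : ℂ → E} {ζ : ℂ} {r : ℝ} (hf : ContinuousOn f (closedBall ζ r)) :
    ContinuousOn (circleAverage f ζ) (Icc 0 r) :=
  ContinuousOn.circleAverage (hf.mono fun z hz => by simpa [dist_eq_norm] using hz.2)
    fun _ ht => ht.1

variable {ψ : ℂ → ℂ}

theorem ContDiffAt.continuousAt_dbar {z : ℂ} (h : ContDiffAt ℝ 1 ψ z) :
    ContinuousAt (dbar ψ) z := by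
  have := h.continuousAt_fderiv one_ne_zero
  unfold dbar
  fun_prop

theorem I_smul_fderiv_sub_fderiv_mul_I (z u : ℂ) :
    I • fderiv ℝ ψ z u - fderiv ℝ ψ z (u * I) = 2 * I * conj u * dbar ψ z := by
  rw [dbar]
  set L := fderiv ℝ ψ z
  have hL : ∀ v : ℂ, L v = v.re * L 1 + v.im * L I := fun v => by
    calc L v = L (v.re • 1 + v.im • I) := by congr 1; apply Complex.ext <;> simp
      _ = _ := by rw [map_add, map_smul, map_smul, real_smul, real_smul]
  have hconj : conj u = u.re - u.im * I := by apply Complex.ext <;> simp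
  rw [hL u, hL (u * I), hconj, smul_eq_mul]
  simp only [mul_re, mul_im, I_re, I_im, mul_zero, mul_one, zero_sub, add_zero, ofReal_neg]
  linear_combination (-(u.re : ℂ) * L I + u.im * L 1 + I * u.im * L I) * I_sq

theorem circleMap_exp_eq (ζ : ℂ) (x y : ℝ) :
    circleMap ζ (Real.exp x) y = ζ + Complex.exp (x + y * I) := by
  rw [circleMap, Complex.exp_add, ofReal_exp]

theorem integral_circleMap_exp_sub_eq_integral_dbar {ζ : ℂ} {a b : ℝ} (hab : a ≤ b)
    (hψ : ∀ z ∈ closedBall ζ (Real.exp b), ContDiffAt ℝ 1 ψ z) :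
    I • ((∫ θ in 0..2 * π, ψ (circleMap ζ (Real.exp b) θ)) -
        ∫ θ in 0..2 * π, ψ (circleMap ζ (Real.exp a) θ)) =
      ∫ x in a..b, ∫ y in 0..2 * π,
        2 * I * conj (Complex.exp (x + y * I)) * dbar ψ (ζ + Complex.exp (x + y * I)) := by
  set F : ℂ → ℂ := fun w => ψ (ζ + Complex.exp w)
  set F' : ℂ → ℂ →L[ℝ] ℂ := fun w => (fderiv ℝ ψ (ζ + Complex.exp w)).comp
    (((1 : ℂ →L[ℂ] ℂ).smulRight (Complex.exp w)).restrictScalars ℝ)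
  have hmem : ∀ w : ℂ, w.re ≤ b → ζ + Complex.exp w ∈ closedBall ζ (Real.exp b) := fun w hw => by
    simpa [Complex.norm_exp] using hw
  have hF : ∀ w : ℂ, w.re ≤ b → HasFDerivAt F (F' w) w := fun w hw =>
    ((hψ _ (hmem w hw)).differentiableAt one_ne_zero).hasFDerivAt.comp w
      (((hasDerivAt_exp w).hasFDerivAt.restrictScalars ℝ).const_add ζ)
  have hF' : ∀ w : ℂ, I • F' w 1 - F' w I =
      2 * I * conj (Complex.exp w) * dbar ψ (ζ + Complex.exp w) := fun w => by
    simpa [F', mul_comm I] using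
      I_smul_fderiv_sub_fderiv_mul_I (ψ := ψ) (ζ + Complex.exp w) (Complex.exp w)
  have hrect : ∀ w ∈ uIcc a b ×ℂ uIcc 0 (2 * π), w.re ≤ b := fun w hw => by
    rw [mem_reProdIm, uIcc_of_le hab] at hw
    exact hw.1.2
  -- Green's theorem on `[a, b] × [0, 2π]`: the vertical sides are the two circles, and the
  -- horizontal sides cancel because `exp` is `2πi`-periodic.
  have green := integral_boundary_rect_of_continuousOn_of_hasFDerivAt_real F F'
    ⟨a, 0⟩ ⟨b, 2 * π⟩ (fun w hw => (hF w (hrect w hw)).continuousAt.continuousWithinAt)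
    (fun w hw => hF w (by simpa [hab] using hw.1.2.le))
    (ContinuousOn.integrableOn_compact (isCompact_uIcc.reProdIm isCompact_uIcc) fun w hw => by
      simp_rw [hF']
      have hd : ContinuousAt (fun w => dbar ψ (ζ + Complex.exp w)) w :=
        (hψ _ (hmem w (hrect w hw))).continuousAt_dbar.comp
          (f := fun w => ζ + Complex.exp w) (by fun_prop)
      exact (ContinuousAt.mul (by fun_prop) hd).continuousWithinAt)
  have hper : ∀ x : ℝ, F (x + (2 * π : ℝ) * I) = F (x + (0 : ℝ) * I) := fun x => by
    simp [F, Complex.exp_add]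
  simp only [hper, sub_self, zero_add, hF'] at green
  simpa only [circleMap_exp_eq, smul_sub] using green

theorem norm_circleAverage_sub_circleAverage_le {ζ : ℂ} {r₁ r₂ M : ℝ} (hr₁ : 0 < r₁)
    (hr : r₁ ≤ r₂) (hψ : ∀ z ∈ closedBall ζ r₂, ContDiffAt ℝ 1 ψ z)
    (hM : ∀ z ∈ closedBall ζ r₂, ‖dbar ψ z‖ ≤ M) :
    ‖circleAverage ψ ζ r₂ - circleAverage ψ ζ r₁‖ ≤ 2 * M * (r₂ - r₁) := by
  obtain ⟨a, rfl⟩ : ∃ a, Real.exp a = r₁ := ⟨Real.log r₁, Real.exp_log hr₁⟩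
  obtain ⟨b, rfl⟩ : ∃ b, Real.exp b = r₂ := ⟨Real.log r₂, Real.exp_log (hr₁.trans_le hr)⟩
  have hab : a ≤ b := Real.exp_le_exp.1 hr
  have hinner : ∀ x : ℝ, x ≤ b → ‖∫ y in 0..2 * π,
      2 * I * conj (Complex.exp (x + y * I)) * dbar ψ (ζ + Complex.exp (x + y * I))‖ ≤
        2 * M * Real.exp x * (2 * π) := fun x hxb => by
    refine (intervalIntegral.norm_integral_le_of_norm_le_const fun y _ => ?_).trans_eq
      (by rw [sub_zero, abs_of_pos two_pi_pos])
    have hz : ζ + Complex.exp (x + y * I) ∈ closedBall ζ (Real.exp b) := by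
      simpa [Complex.norm_exp] using hxb
    calc _ = 2 * Real.exp x * ‖dbar ψ (ζ + Complex.exp (x + y * I))‖ := by
          simp [Complex.norm_exp]
      _ ≤ 2 * Real.exp x * M := by gcongr; exact hM _ hz
      _ = 2 * M * Real.exp x := by ring
  have hdouble := intervalIntegral.norm_integral_le_of_norm_le hab
    (ae_of_all volume fun x hx => hinner x hx.2)
    ((by fun_prop : Continuous fun x => 2 * M * Real.exp x * (2 * π)).intervalIntegrable a b)
  rw [← integral_circleMap_exp_sub_eq_integral_dbar hab hψ, norm_smul, norm_I, one_mul] at hdouble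
  rw [circleAverage_def, circleAverage_def, ← smul_sub, norm_smul]
  calc _ ≤ ‖(2 * π)⁻¹‖ * ∫ x in a..b, 2 * M * Real.exp x * (2 * π) := by gcongr
    _ = 2 * M * (Real.exp b - Real.exp a) := by
      rw [intervalIntegral.integral_mul_const, intervalIntegral.integral_const_mul, integral_exp,
        Real.norm_eq_abs, abs_inv, abs_of_pos two_pi_pos]
      field_simp

theorem norm_circleAverage_sub_le {ζ : ℂ} {r M : ℝ} (hr : 0 ≤ r)
    (hψ : ∀ z ∈ closedBall ζ r, ContDiffAt ℝ 1 ψ z)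
    (hM : ∀ z ∈ closedBall ζ r, ‖dbar ψ z‖ ≤ M) :
    ‖circleAverage ψ ζ r - ψ ζ‖ ≤ 2 * M * r := by
  rcases hr.eq_or_lt with rfl | hr
  · simp
  have hM0 : 0 ≤ M := (norm_nonneg _).trans (hM ζ (mem_closedBall_self hr.le))
  have hψc := continuousOn_of_forall_continuousAt fun z hz => (hψ z hz).continuousAt
  have hlim : Tendsto (circleAverage ψ ζ) (𝓝[>] 0) (𝓝 (ψ ζ)) := by
    rw [← circleAverage_zero (f := ψ) (c := ζ)]
    exact ((continuousOn_circleAverage hψc 0 (left_mem_Icc.2 hr.le)).mono_of_mem_nhdsWithin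
      (Icc_mem_nhdsGT hr)).tendsto
  refine le_of_tendsto (tendsto_const_nhds.sub hlim).norm ?_
  filter_upwards [Ioo_mem_nhdsGT hr] with t ht
  exact (norm_circleAverage_sub_circleAverage_le ht.1 ht.2.le hψ hM).trans (by nlinarith [ht.1])

theorem norm_integral_ball_sub_le {ζ : ℂ} {ρ M : ℝ} (hρ : 0 ≤ ρ)
    (hψ : ∀ z ∈ closedBall ζ ρ, ContDiffAt ℝ 1 ψ z)
    (hM : ∀ z ∈ closedBall ζ ρ, ‖dbar ψ z‖ ≤ M) :
    ‖(∫ z in ball ζ ρ, ψ z) - (π * ρ ^ 2) • ψ ζ‖ ≤ 4 / 3 * π * M * ρ ^ 3 := by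
  have hψc := continuousOn_of_forall_continuousAt fun z hz => (hψ z hz).continuousAt
  have harea : (π * ρ ^ 2) • ψ ζ = ∫ r in 0..ρ, (2 * π * r) • ψ ζ := by
    rw [intervalIntegral.integral_smul_const, intervalIntegral.integral_const_mul, integral_id]
    ring_nf
  have hcA : IntervalIntegrable (fun r => (2 * π * r) • circleAverage ψ ζ r) volume 0 ρ := by
    refine ContinuousOn.intervalIntegrable ?_
    rw [uIcc_of_le hρ]
    exact (by fun_prop : Continuous fun r : ℝ => 2 * π * r).continuousOn.smul
      (continuousOn_circleAverage hψc)
  rw [integral_ball_eq_integral_circleAverage hρ hψc, harea,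
    ← intervalIntegral.integral_sub hcA (Continuous.intervalIntegrable (by fun_prop) _ _)]
  calc _ ≤ ∫ r in 0..ρ, 4 * π * M * r ^ 2 := by
        refine intervalIntegral.norm_integral_le_of_norm_le hρ (ae_of_all _ fun r hr => ?_)
          (Continuous.intervalIntegrable (by fun_prop) _ _)
        have hr₀ := hr.1
        have hr' : closedBall ζ r ⊆ closedBall ζ ρ := closedBall_subset_closedBall hr.2
        rw [← smul_sub, norm_smul, Real.norm_of_nonneg (by positivity)]
        calc _ ≤ 2 * π * r * (2 * M * r) := by
              gcongr
              exact norm_circleAverage_sub_le hr.1.le (fun z hz => hψ z (hr' hz))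
                fun z hz => hM z (hr' hz)
          _ = _ := by ring
    _ = 4 / 3 * π * M * ρ ^ 3 := by
        rw [intervalIntegral.integral_const_mul, integral_pow]
        ring

theorem norm_sub_le_of_norm_dbar_le {s : Set ℂ} {ζ₁ ζ₂ : ℂ} {ρ M₁ M₂ : ℝ} (hρ : 0 < ρ)
    (hd : dist ζ₁ ζ₂ ≤ ρ) (h₁ : closedBall ζ₁ ρ ⊆ s) (h₂ : closedBall ζ₂ ρ ⊆ s)
    (hψ : ∀ z ∈ s, ContDiffAt ℝ 1 ψ z) (hM₁ : ∀ z ∈ s, ‖ψ z‖ ≤ M₁)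
    (hM₂ : ∀ z ∈ s, ‖dbar ψ z‖ ≤ M₂) :
    ‖ψ ζ₁ - ψ ζ₂‖ ≤ 8 / 3 * M₂ * ρ + 6 * M₁ * dist ζ₁ ζ₂ / ρ := by
  set d := dist ζ₁ ζ₂
  have hM₁0 : 0 ≤ M₁ := (norm_nonneg _).trans (hM₁ ζ₁ (h₁ (mem_closedBall_self hρ.le)))
  have hmean : ∀ ζ, closedBall ζ ρ ⊆ s →
      ‖(∫ z in ball ζ ρ, ψ z) - (π * ρ ^ 2) • ψ ζ‖ ≤ 4 / 3 * π * M₂ * ρ ^ 3 := fun ζ h =>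
    norm_integral_ball_sub_le hρ.le (fun z hz => hψ z (h hz)) fun z hz => hM₂ z (h hz)
  have hshift : ‖(∫ z in ball ζ₁ ρ, ψ z) - ∫ z in ball ζ₂ ρ, ψ z‖ ≤
      M₁ * (2 * (π * ((ρ + d) ^ 2 - ρ ^ 2))) := by
    have hballs : ball ζ₁ ρ ∪ ball ζ₂ ρ ⊆ closedBall ζ₁ ρ ∪ closedBall ζ₂ ρ :=
      union_subset_union ball_subset_closedBall ball_subset_closedBall
    have hψc : ContinuousOn ψ (closedBall ζ₁ ρ ∪ closedBall ζ₂ ρ) :=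
      continuousOn_of_forall_continuousAt fun z hz => (hψ z (union_subset h₁ h₂ hz)).continuousAt
    have hint : IntegrableOn ψ (closedBall ζ₁ ρ ∪ closedBall ζ₂ ρ) :=
      hψc.integrableOn_compact ((isCompact_closedBall _ _).union (isCompact_closedBall _ _))
    refine (norm_setIntegral_sub_setIntegral_le measurableSet_ball measurableSet_ball
      measure_ball_lt_top.ne measure_ball_lt_top.ne (hint.mono_set hballs)
      fun z hz => hM₁ z (union_subset h₁ h₂ (hballs hz))).trans ?_
    have h₁₂ := measureReal_ball_sdiff_ball_le ζ₁ ζ₂ hρ.le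
    have h₂₁ := measureReal_ball_sdiff_ball_le ζ₂ ζ₁ hρ.le
    rw [dist_comm] at h₂₁
    gcongr
    linarith
  have hρ' : π * ρ ^ 2 * (6 * M₁ * d / ρ) = 6 * π * M₁ * ρ * d := by
    field_simp
  refine le_of_mul_le_mul_left ?_ (by positivity : 0 < π * ρ ^ 2)
  calc π * ρ ^ 2 * ‖ψ ζ₁ - ψ ζ₂‖ = ‖(π * ρ ^ 2) • (ψ ζ₁ - ψ ζ₂)‖ := by
        rw [norm_smul, Real.norm_of_nonneg (by positivity)]
    _ = ‖((∫ z in ball ζ₂ ρ, ψ z) - (π * ρ ^ 2) • ψ ζ₂) -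
          ((∫ z in ball ζ₁ ρ, ψ z) - (π * ρ ^ 2) • ψ ζ₁) +
          ((∫ z in ball ζ₁ ρ, ψ z) - ∫ z in ball ζ₂ ρ, ψ z)‖ := by
        rw [smul_sub]
        congr 1
        abel
    _ ≤ 4 / 3 * π * M₂ * ρ ^ 3 + 4 / 3 * π * M₂ * ρ ^ 3 +
          M₁ * (2 * (π * ((ρ + d) ^ 2 - ρ ^ 2))) :=
        norm_add_le_of_le (norm_sub_le_of_le (hmean _ h₂) (hmean _ h₁)) hshift
    _ ≤ π * ρ ^ 2 * (8 / 3 * M₂ * ρ + 6 * M₁ * d / ρ) := by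
        rw [mul_add, hρ']
        nlinarith [mul_nonneg (mul_nonneg hM₁0 (dist_nonneg : 0 ≤ d)) (sub_nonneg.2 hd), pi_pos]

theorem approx_holomorphic_family_equicontinuous_general
    (R M₁ M₂ : ℝ) (c₀ : ℂ) (F : Set (ℂ → ℂ))
    (hC1 : ∀ ψ ∈ F, ContDiffOn ℝ 1 ψ (closedBall c₀ R))
    (hM₁ : ∀ ψ ∈ F, ∀ z ∈ closedBall c₀ R, ‖ψ z‖ ≤ M₁)
    (hM₂ : ∀ ψ ∈ F, ∀ z ∈ ball c₀ R, ‖dbar ψ z‖ ≤ M₂) :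
    ∀ ζ₀ ∈ ball c₀ R, ∀ ε : ℝ, 0 < ε → ∃ δ : ℝ, 0 < δ ∧ ball ζ₀ δ ⊆ ball c₀ R ∧
      ∀ ψ ∈ F, ∀ ζ₁ ∈ ball ζ₀ δ, ∀ ζ₂ ∈ ball ζ₀ δ,
        ‖ψ ζ₁ - ψ ζ₂‖ < ε := by
  intro ζ₀ hζ₀ ε hε
  obtain ⟨r, hr, hrR⟩ := Metric.isOpen_iff.1 isOpen_ball ζ₀ hζ₀
  obtain ⟨ρ, hρ, hρr, hρε⟩ :=
    exists_pos_le_and_mul_lt (half_pos hr) (by positivity : 0 ≤ 8 / 3 * |M₂|) (half_pos hε)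
  obtain ⟨δ, hδ, hδρ, hδε⟩ :=
    exists_pos_le_and_mul_lt (half_pos hρ) (by positivity : 0 ≤ 12 * |M₁| / ρ) (half_pos hε)
  refine ⟨δ, hδ, (ball_subset_ball (by linarith)).trans hrR, fun ψ hψ ζ₁ hζ₁ ζ₂ hζ₂ => ?_⟩
  have hsub : ∀ ζ ∈ ball ζ₀ δ, closedBall ζ ρ ⊆ ball c₀ R := fun ζ hζ =>
    (closedBall_subset_ball' (by rw [mem_ball] at hζ; linarith)).trans hrR
  have hd : dist ζ₁ ζ₂ < 2 * δ := by
    linarith [dist_triangle_right ζ₁ ζ₂ ζ₀, mem_ball.1 hζ₁, mem_ball.1 hζ₂]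
  have hψ' : ∀ z ∈ ball c₀ R, ContDiffAt ℝ 1 ψ z := fun z hz =>
    (hC1 ψ hψ).contDiffAt (mem_of_superset (isOpen_ball.mem_nhds hz) ball_subset_closedBall)
  have hest := norm_sub_le_of_norm_dbar_le hρ (by linarith) (hsub ζ₁ hζ₁) (hsub ζ₂ hζ₂) hψ'
    (fun z hz => (hM₁ ψ hψ z (ball_subset_closedBall hz)).trans (le_abs_self _))
    (fun z hz => (hM₂ ψ hψ z hz).trans (le_abs_self _))
  have hdρ : 6 * |M₁| * dist ζ₁ ζ₂ / ρ ≤ 12 * |M₁| / ρ * δ := by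
    calc 6 * |M₁| * dist ζ₁ ζ₂ / ρ ≤ 6 * |M₁| * (2 * δ) / ρ := by gcongr
      _ = 12 * |M₁| / ρ * δ := by ring
  linarith

/-- **Equicontinuity of approximately holomorphic families.** Let `F` be a
family of `C¹` functions on the closed disk `D̄` of radius `R` about `c₀`, with
uniform bounds `|ψ| ≤ M₁` and `|∂ψ/∂z̄| ≤ M₂`. Then `F` is equicontinuous at
every interior point of `D`. -/
theorem approx_holomorphic_family_equicontinuous
    (R M₁ M₂ : ℝ) (hR : 0 < R) (c₀ : ℂ) (F : Set (ℂ → ℂ))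
    (hC1 : ∀ ψ ∈ F, ContDiffOn ℝ 1 ψ (closedBall c₀ R))
    (hM₁ : ∀ ψ ∈ F, ∀ z ∈ closedBall c₀ R, ‖ψ z‖ ≤ M₁)
    (hM₂ : ∀ ψ ∈ F, ∀ z ∈ ball c₀ R, ‖dbar ψ z‖ ≤ M₂) :
    ∀ ζ₀ ∈ ball c₀ R, ∀ ε : ℝ, 0 < ε → ∃ δ : ℝ, 0 < δ ∧ ball ζ₀ δ ⊆ ball c₀ R ∧
      ∀ ψ ∈ F, ∀ ζ₁ ∈ ball ζ₀ δ, ∀ ζ₂ ∈ ball ζ₀ δ,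
        ‖ψ ζ₁ - ψ ζ₂‖ < ε :=
  approx_holomorphic_family_equicontinuous_general R M₁ M₂ c₀ F hC1 hM₁ hM₂
end

section
/- Let T ⊂ ℤ⁴ be the set of centers of a D-separated partition class: any two distinct points of T have distance ≥ D. Then for every w ∈ ℝ⁴ and a > 0 with aD² ≥ 8, Σ_{μ∈T} exp(-a|μ-w|²) ≤ C·exp(-a·dist(w,T)²/2) for a constant C depending only on the dimension, uniformly in w, a, D. -/
set_option maxHeartbeats 1000000

open Metric

local notation "E" => EuclideanSpace ℝ (Fin 4)

private lemma gauss_aux_base : Summable fun j : ℤ => Real.exp (3 - |(j : ℝ)|) := by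
  have hgeo : Summable (fun n : ℕ => Real.exp 3 * Real.exp (-1) ^ n) :=
    (summable_geometric_of_lt_one (Real.exp_pos _).le
      (Real.exp_lt_one_iff.mpr (by norm_num))).mul_left _
  have key : ∀ n : ℕ, Real.exp (3 - |(n : ℝ)|) = Real.exp 3 * Real.exp (-1) ^ n := by
    intro n
    rw [← Real.exp_nat_mul, ← Real.exp_add]
    congr 1
    rw [abs_of_nonneg (by positivity)]
    ring
  apply Summable.of_nat_of_neg
  · refine hgeo.congr fun n => ?_
    rw [← key n]
    norm_num
  · refine hgeo.congr fun n => ?_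
    rw [← key n]
    push_cast [abs_neg]
    norm_num

private lemma gauss_aux_oneD (s : ℝ) :
    Summable (fun n : ℤ => Real.exp (2 - |(n : ℝ) - s|)) ∧
      (∑' n : ℤ, Real.exp (2 - |(n : ℝ) - s|)) ≤ ∑' j : ℤ, Real.exp (3 - |(j : ℝ)|) := by
  set m : ℤ := ⌊s⌋ with hm
  have hshift : Summable (fun n : ℤ => Real.exp (3 - |(n : ℝ) - (m : ℝ)|)) := by
    have h := gauss_aux_base.comp_injective (Equiv.subRight m).injective
    refine h.congr fun n => ?_
    simp only [Function.comp_apply, Equiv.subRight_apply]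
    push_cast
    ring_nf
  have hle : ∀ n : ℤ, Real.exp (2 - |(n : ℝ) - s|) ≤ Real.exp (3 - |(n : ℝ) - (m : ℝ)|) := by
    intro n
    apply Real.exp_le_exp.mpr
    have h1 : (m : ℝ) ≤ s := Int.floor_le s
    have h2 : s < (m : ℝ) + 1 := Int.lt_floor_add_one s
    have h3 : |s - (m : ℝ)| ≤ 1 := by rw [abs_of_nonneg (by linarith)]; linarith
    have : |(n : ℝ) - (m : ℝ)| ≤ |(n : ℝ) - s| + |s - (m : ℝ)| := abs_sub_le _ _ _
    linarith
  have hsum : Summable (fun n : ℤ => Real.exp (2 - |(n : ℝ) - s|)) :=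
    Summable.of_nonneg_of_le (fun n => (Real.exp_pos _).le) hle hshift
  refine ⟨hsum, ?_⟩
  calc (∑' n : ℤ, Real.exp (2 - |(n : ℝ) - s|))
      ≤ ∑' n : ℤ, Real.exp (3 - |(n : ℝ) - (m : ℝ)|) := Summable.tsum_le_tsum hle hsum hshift
    _ = ∑' j : ℤ, Real.exp (3 - |(j : ℝ)|) := by
        rw [← (Equiv.subRight m).tsum_eq (fun j : ℤ => Real.exp (3 - |(j : ℝ)|))]
        apply tsum_congr
        intro n
        simp only [Equiv.subRight_apply]
        push_cast
        ring_nf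

private lemma gauss_aux_coord {b D x y : ℝ} (hD : 0 < D) (hb4 : 4 ≤ b * D ^ 2) :
    |(⌊2 * x / D⌋ : ℝ) - 2 * y / D| - 2 ≤ b * (x - y) ^ 2 := by
  set u : ℝ := 2 * x / D with hu
  set s : ℝ := 2 * y / D with hs
  set n : ℤ := ⌊u⌋ with hn
  have h1 : (n : ℝ) ≤ u := Int.floor_le u
  have h2 : u < (n : ℝ) + 1 := Int.lt_floor_add_one u
  have habs : |(n : ℝ) - s| ≤ |u - s| + 1 := by
    have ha1 : |(n : ℝ) - u| ≤ 1 := by rw [abs_of_nonpos (by linarith)]; linarith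
    have := abs_sub_le (n : ℝ) u s
    linarith
  have hsq : |u - s| - 1 ≤ (u - s) ^ 2 := by
    nlinarith [sq_nonneg (|u - s| - 1), sq_abs (u - s), abs_nonneg (u - s)]
  have hxy : x - y = D / 2 * (u - s) := by
    rw [hu, hs]; field_simp
  have hfinal : (u - s) ^ 2 ≤ b * (x - y) ^ 2 := by
    rw [hxy]
    nlinarith [sq_nonneg (u - s)]
  linarith

private lemma gauss_aux_normsq (v : EuclideanSpace ℝ (Fin 4)) :
    ‖v‖ ^ 2 = ∑ i, v i ^ 2 := by
  rw [EuclideanSpace.norm_eq, Real.sq_sqrt (by positivity)]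
  simp [Real.norm_eq_abs, sq_abs]

/-- **Gaussian sums over separated sets.** There is a constant `C > 0`
(depending only on the dimension) such that for every `D`-separated set
`T ⊂ ℝ⁴`, every `w ∈ ℝ⁴` and every `a > 0` with `aD² ≥ 8`, the Gaussian sum
over `T` is summable and
`Σ_{μ∈T} exp(-a|μ-w|²) ≤ C·exp(-a·dist(w,T)²/2)`. -/
theorem separated_gaussian_sum_bound :
    ∃ C : ℝ, 0 < C ∧
      ∀ (T : Set (EuclideanSpace ℝ (Fin 4))) (D a : ℝ)
        (w : EuclideanSpace ℝ (Fin 4)),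
        0 < D → 0 < a →
        (∀ x ∈ T, ∀ y ∈ T, x ≠ y → D ≤ dist x y) →
        8 ≤ a * D ^ 2 →
        Summable (fun μ : T => Real.exp (-a * ‖(μ : EuclideanSpace ℝ (Fin 4)) - w‖ ^ 2))
        ∧ ∑' μ : T, Real.exp (-a * ‖(μ : EuclideanSpace ℝ (Fin 4)) - w‖ ^ 2)
            ≤ C * Real.exp (-a * infDist w T ^ 2 / 2) := by
  classical
  set S : ℝ := ∑' j : ℤ, Real.exp (3 - |(j : ℝ)|) with hS
  have hSpos : 0 < S := by
    have h0 : Real.exp (3 - |((0 : ℤ) : ℝ)|) ≤ S :=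
      Summable.le_tsum gauss_aux_base 0 (fun _ _ => (Real.exp_pos _).le)
    have := Real.exp_pos (3 - |((0 : ℤ) : ℝ)|)
    linarith
  refine ⟨S ^ 4, by positivity, ?_⟩
  intro T D a w hD ha hsep h8
  set d : ℝ := infDist w T with hd
  have hb4 : 4 ≤ a / 2 * D ^ 2 := by linarith
  set s : Fin 4 → ℝ := fun i => 2 * w i / D with hsdef
  set g : Fin 4 → ℤ → ℝ := fun i n => Real.exp (2 - |(n : ℝ) - s i|) with hgdef
  have hgpos : ∀ i n, 0 < g i n := fun i n => Real.exp_pos _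
  have hgsum : ∀ i, Summable (g i) := fun i => (gauss_aux_oneD (s i)).1
  have hgle : ∀ i, (∑' n : ℤ, g i n) ≤ S := fun i => (gauss_aux_oneD (s i)).2
  set G : ℤ × ℤ × ℤ × ℤ → ℝ :=
    fun p => g 0 p.1 * (g 1 p.2.1 * (g 2 p.2.2.1 * g 3 p.2.2.2)) with hGdef
  have hGpos : ∀ p, 0 < G p := fun p =>
    mul_pos (hgpos _ _) (mul_pos (hgpos _ _) (mul_pos (hgpos _ _) (hgpos _ _)))
  have h23 : Summable (fun q : ℤ × ℤ => g 2 q.1 * g 3 q.2) :=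
    Summable.mul_of_nonneg (hgsum 2) (hgsum 3)
      (fun n => (hgpos 2 n).le) (fun n => (hgpos 3 n).le)
  have h123 : Summable (fun q : ℤ × ℤ × ℤ => g 1 q.1 * (g 2 q.2.1 * g 3 q.2.2)) :=
    Summable.mul_of_nonneg (hgsum 1) h23 (fun n => (hgpos 1 n).le)
      (fun q => mul_nonneg (hgpos 2 q.1).le (hgpos 3 q.2).le)
  have hG : Summable G :=
    Summable.mul_of_nonneg (hgsum 0) h123 (fun n => (hgpos 0 n).le)
      (fun q => mul_nonneg (hgpos 1 q.1).le
        (mul_nonneg (hgpos 2 q.2.1).le (hgpos 3 q.2.2).le))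
  have hnormg : ∀ i, Summable (fun n : ℤ => ‖g i n‖) := fun i =>
    (hgsum i).congr fun n => ((Real.norm_eq_abs _).trans (abs_of_pos (hgpos i n))).symm
  have hnorm23 : Summable (fun q : ℤ × ℤ => ‖g 2 q.1 * g 3 q.2‖) :=
    h23.congr fun q => ((Real.norm_eq_abs _).trans
      (abs_of_pos (mul_pos (hgpos 2 q.1) (hgpos 3 q.2)))).symm
  have hnorm123 : Summable (fun q : ℤ × ℤ × ℤ => ‖g 1 q.1 * (g 2 q.2.1 * g 3 q.2.2)‖) :=
    h123.congr fun q => ((Real.norm_eq_abs _).trans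
      (abs_of_pos (mul_pos (hgpos 1 q.1) (mul_pos (hgpos 2 q.2.1) (hgpos 3 q.2.2))))).symm
  have hE23 : (∑' q : ℤ × ℤ, g 2 q.1 * g 3 q.2) = (∑' n, g 2 n) * ∑' n, g 3 n :=
    (tsum_mul_tsum_of_summable_norm (hnormg 2) (hnormg 3)).symm
  have hE123 : (∑' q : ℤ × ℤ × ℤ, g 1 q.1 * (g 2 q.2.1 * g 3 q.2.2))
      = (∑' n, g 1 n) * ∑' q : ℤ × ℤ, g 2 q.1 * g 3 q.2 :=
    (tsum_mul_tsum_of_summable_norm (hnormg 1) hnorm23).symm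
  have hEG : (∑' p, G p)
      = (∑' n, g 0 n) * ∑' q : ℤ × ℤ × ℤ, g 1 q.1 * (g 2 q.2.1 * g 3 q.2.2) :=
    (tsum_mul_tsum_of_summable_norm (hnormg 0) hnorm123).symm
  have hGsum : (∑' p, G p) ≤ S ^ 4 := by
    rw [hEG, hE123, hE23]
    have h0 : (0:ℝ) ≤ ∑' n, g 0 n := tsum_nonneg fun n => (hgpos 0 n).le
    have h1 : (0:ℝ) ≤ ∑' n, g 1 n := tsum_nonneg fun n => (hgpos 1 n).le
    have h2 : (0:ℝ) ≤ ∑' n, g 2 n := tsum_nonneg fun n => (hgpos 2 n).le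
    have h3 : (0:ℝ) ≤ ∑' n, g 3 n := tsum_nonneg fun n => (hgpos 3 n).le
    calc (∑' n, g 0 n) * ((∑' n, g 1 n) * ((∑' n, g 2 n) * ∑' n, g 3 n))
        ≤ S * (S * (S * S)) := by
          gcongr <;> [exact hgle 0; exact hgle 1; exact hgle 2; exact hgle 3]
      _ = S ^ 4 := by ring
  -- the injection
  set F : T → ℤ × ℤ × ℤ × ℤ :=
    fun μ => (⌊2 * (μ : E) 0 / D⌋, ⌊2 * (μ : E) 1 / D⌋, ⌊2 * (μ : E) 2 / D⌋,
      ⌊2 * (μ : E) 3 / D⌋) with hFdef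
  have hFinj : Function.Injective F := by
    intro μ ν hμν
    by_contra hne
    have hne' : (μ : E) ≠ (ν : E) := fun h => hne (Subtype.ext h)
    have hsep' : D ≤ dist (μ : E) (ν : E) := hsep _ μ.2 _ ν.2 hne'
    have hfl : ∀ i : Fin 4, ⌊2 * (μ : E) i / D⌋ = ⌊2 * (ν : E) i / D⌋ := by
      intro i
      fin_cases i
      · exact congrArg Prod.fst hμν
      · exact congrArg (fun p => p.2.1) hμν
      · exact congrArg (fun p => p.2.2.1) hμν
      · exact congrArg (fun p => p.2.2.2) hμν
    have hcoord : ∀ i : Fin 4, |(μ : E) i - (ν : E) i| < D / 2 := by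
      intro i
      have h1 := Int.abs_sub_lt_one_of_floor_eq_floor (hfl i)
      rw [div_sub_div_same, abs_div, abs_of_pos hD, div_lt_one hD] at h1
      have h2 : |2 * ((μ : E) i - (ν : E) i)| < D := by
        rw [show 2 * ((μ : E) i - (ν : E) i) = 2 * (μ : E) i - 2 * (ν : E) i by ring]
        exact h1
      rw [abs_mul] at h2
      norm_num at h2
      linarith
    have hlt : dist (μ : E) (ν : E) < D := by
      have hdist : dist (μ : E) (ν : E) = ‖(μ : E) - (ν : E)‖ := dist_eq_norm _ _
      have hnorm2 : ‖(μ : E) - (ν : E)‖ ^ 2 < D ^ 2 := by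
        rw [gauss_aux_normsq]
        have hterm : ∀ i : Fin 4, ((μ : E) - (ν : E)) i ^ 2 < (D / 2) ^ 2 := by
          intro i
          have h := hcoord i
          have happ : ((μ : E) - (ν : E)) i = (μ : E) i - (ν : E) i := rfl
          rw [happ, ← sq_abs]
          nlinarith [abs_nonneg ((μ : E) i - (ν : E) i)]
        calc ∑ i, ((μ : E) - (ν : E)) i ^ 2
            < ∑ _i : Fin 4, (D / 2) ^ 2 := by
              apply Finset.sum_lt_sum_of_nonempty ⟨0, Finset.mem_univ 0⟩
              intro i _
              exact hterm i
          _ ≤ D ^ 2 := by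
              rw [Finset.sum_const]
              simp only [Finset.card_univ, Fintype.card_fin, nsmul_eq_mul]
              nlinarith
      rw [hdist]
      nlinarith [norm_nonneg ((μ : E) - (ν : E))]
    linarith
  -- per-term bound
  have hterm : ∀ μ : T,
      Real.exp (-a * ‖(μ : E) - w‖ ^ 2) ≤ Real.exp (-a * d ^ 2 / 2) * G (F μ) := by
    intro μ
    have e0 : |(⌊2 * (μ : E) 0 / D⌋ : ℝ) - s 0| - 2 ≤ a / 2 * ((μ : E) 0 - w 0) ^ 2 :=
      gauss_aux_coord hD hb4
    have e1 : |(⌊2 * (μ : E) 1 / D⌋ : ℝ) - s 1| - 2 ≤ a / 2 * ((μ : E) 1 - w 1) ^ 2 :=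
      gauss_aux_coord hD hb4
    have e2 : |(⌊2 * (μ : E) 2 / D⌋ : ℝ) - s 2| - 2 ≤ a / 2 * ((μ : E) 2 - w 2) ^ 2 :=
      gauss_aux_coord hD hb4
    have e3 : |(⌊2 * (μ : E) 3 / D⌋ : ℝ) - s 3| - 2 ≤ a / 2 * ((μ : E) 3 - w 3) ^ 2 :=
      gauss_aux_coord hD hb4
    have hdle : d ≤ ‖(μ : E) - w‖ := by
      rw [hd]
      calc infDist w T ≤ dist w (μ : E) := infDist_le_dist_of_mem μ.2
        _ = ‖(μ : E) - w‖ := by rw [dist_eq_norm, norm_sub_rev]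
    have hd0 : 0 ≤ d := hd ▸ infDist_nonneg
    have hd2 : d ^ 2 ≤ ‖(μ : E) - w‖ ^ 2 := by nlinarith [norm_nonneg ((μ : E) - w)]
    have hns : ‖(μ : E) - w‖ ^ 2
        = ((μ : E) 0 - w 0) ^ 2 + ((μ : E) 1 - w 1) ^ 2 + ((μ : E) 2 - w 2) ^ 2
          + ((μ : E) 3 - w 3) ^ 2 := by
      rw [gauss_aux_normsq, Fin.sum_univ_four]
      rfl
    have hGF : G (F μ) = Real.exp ((2 - |(⌊2 * (μ : E) 0 / D⌋ : ℝ) - s 0|)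
        + ((2 - |(⌊2 * (μ : E) 1 / D⌋ : ℝ) - s 1|)
        + ((2 - |(⌊2 * (μ : E) 2 / D⌋ : ℝ) - s 2|)
        + (2 - |(⌊2 * (μ : E) 3 / D⌋ : ℝ) - s 3|)))) := by
      simp only [hGdef, hFdef, hgdef, ← Real.exp_add]
    rw [hGF, ← Real.exp_add, Real.exp_le_exp, hns]
    rw [hns] at hd2
    have hmono := mul_le_mul_of_nonneg_left hd2 ha.le
    linarith
  -- conclusion
  have hmaj : Summable (fun μ : T => Real.exp (-a * d ^ 2 / 2) * G (F μ)) :=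
    (hG.comp_injective hFinj).mul_left _
  have hsummable : Summable (fun μ : T => Real.exp (-a * ‖(μ : E) - w‖ ^ 2)) :=
    Summable.of_nonneg_of_le (fun μ => (Real.exp_pos _).le) hterm hmaj
  refine ⟨hsummable, ?_⟩
  calc ∑' μ : T, Real.exp (-a * ‖(μ : E) - w‖ ^ 2)
      ≤ ∑' μ : T, Real.exp (-a * d ^ 2 / 2) * G (F μ) := Summable.tsum_le_tsum hterm hsummable hmaj
    _ = Real.exp (-a * d ^ 2 / 2) * ∑' μ : T, G (F μ) := tsum_mul_left
    _ ≤ Real.exp (-a * d ^ 2 / 2) * ∑' p, G p := by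
        refine mul_le_mul_of_nonneg_left ?_ (Real.exp_pos _).le
        exact Summable.tsum_le_tsum_of_inj F hFinj (fun p _ => (hGpos p).le) (fun μ => le_rfl)
          (hG.comp_injective hFinj) hG
    _ ≤ Real.exp (-a * d ^ 2 / 2) * S ^ 4 :=
        mul_le_mul_of_nonneg_left hGsum (Real.exp_pos _).le
    _ = S ^ 4 * Real.exp (-a * infDist w T ^ 2 / 2) := by rw [hd]; ring
end
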